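/- For every Schwartz function f : ℝ → ℂ there exists a constant C > 0 such that for all θ ∈ (0,1]: ‖h_θ f + 4f − θ·(−f'' + Sf)‖_{L²(ℝ)} ≤ C·θ², where (h_θ f)(s) = −f(s+√θ) − f(s−√θ) − 2cos(√θ·s)·f(s) and (Sf)(s) = s²·f(s). (This is the rigorous form, on Schwartz vectors, of the expansion h_θ = −4 + θ(−d²/ds² + s²) + O(θ²) of the operator h_θ = −2cos(√θ·(1/i)d/ds) − 2cos(√θ·s).) -/

import Mathlib

open MeasureTheory Real Set
open scoped ENNReal
set_option maxHeartbeats 1600000000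

lemma mvt_pow {E : Type*} [NormedAddCommGroup E] [NormedSpace ℝ E]
    {φ φ' : ℝ → E} {K b : ℝ} {k : ℕ}
    (h0 : φ 0 = 0)
    (hder : ∀ t, HasDerivAt φ (φ' t) t)
    (hb : ∀ t ∈ Set.Icc (0:ℝ) b, ‖φ' t‖ ≤ K * t ^ k) :
    ∀ t ∈ Set.Icc (0:ℝ) b, ‖φ t‖ ≤ K / (k+1) * t ^ (k+1) := by
  have hB : ∀ x : ℝ, HasDerivAt (fun t : ℝ => K/(k+1) * t^(k+1)) (K * x^k) x := by
    intro x
    have h1 := (hasDerivAt_pow (k+1) x).const_mul (K/((k:ℝ)+1))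
    refine h1.congr_deriv ?_
    have : ((k:ℝ)+1) ≠ 0 := by positivity
    push_cast
    field_simp
  intro t ht
  exact image_norm_le_of_norm_deriv_right_le_deriv_boundary
    (fun x hx => (hder x).continuousAt.continuousWithinAt)
    (fun x hx => (hder x).hasDerivWithinAt)
    (by simp [h0]) hB
    (fun x hx => hb x ⟨hx.1, hx.2.le⟩) ht

lemma cos_taylor_nonneg {x : ℝ} (hx : 0 ≤ x) :
    |Real.cos x - 1 + x^2/2| ≤ x^4/24 := by
  have s1 := mvt_pow (φ := Real.sin) (φ' := Real.cos) (K := 1) (k := 0) (b := x)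
    Real.sin_zero (fun t => Real.hasDerivAt_sin t)
    (by intro t ht; simpa using Real.abs_cos_le_one t)
  have s2 := mvt_pow (φ := fun t => 1 - Real.cos t) (φ' := Real.sin) (K := 1) (k := 1) (b := x)
    (by simp) (fun t => by simpa using (Real.hasDerivAt_cos t).const_sub 1)
    (by intro t ht; have := s1 t ht; norm_num at this ⊢; exact this)
  have s3 := mvt_pow (φ := fun t => t - Real.sin t) (φ' := fun t => 1 - Real.cos t)
    (K := 1/2) (k := 2) (b := x)
    (by simp) (fun t => by exact (hasDerivAt_id' t).sub (Real.hasDerivAt_sin t))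
    (by intro t ht; have := s2 t ht; norm_num at this ⊢; exact this)
  have s4 := mvt_pow (φ := fun t => Real.cos t - 1 + t^2/2) (φ' := fun t => t - Real.sin t)
    (K := 1/6) (k := 3) (b := x)
    (by simp)
    (fun t => by
      have h1 := ((Real.hasDerivAt_cos t).sub_const 1).add ((hasDerivAt_pow 2 t).div_const 2)
      refine h1.congr_deriv ?_
      push_cast
      ring)
    (by intro t ht; have := s3 t ht; norm_num at this ⊢; exact this)
  have := s4 x ⟨hx, le_refl x⟩
  rw [Real.norm_eq_abs] at this
  norm_num at this
  linarith [this]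

lemma cos_taylor (x : ℝ) : |Real.cos x - 1 + x^2/2| ≤ x^4/24 := by
  rcases le_total 0 x with h | h
  · exact cos_taylor_nonneg h
  · have := cos_taylor_nonneg (x := -x) (by linarith)
    rw [Real.cos_neg, show (-x)^2 = x^2 by ring, show (-x)^4 = x^4 by ring] at this
    exact this

theorem harper_semiclassical_expansion (f : SchwartzMap ℝ ℂ) :
    ∃ C : ℝ, 0 < C ∧ ∀ θ ∈ Set.Ioc (0 : ℝ) 1,
      eLpNorm (fun s : ℝ =>
          (-(f (s + Real.sqrt θ)) - f (s - Real.sqrt θ) -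
              ((2 * Real.cos (Real.sqrt θ * s) : ℝ) : ℂ) * f s) +
            4 * f s -
            (θ : ℂ) * (-(deriv (deriv (f : ℝ → ℂ)) s) + ((s : ℂ) ^ 2) * f s)) 2 volume ≤
        ENNReal.ofReal (C * θ ^ 2) := by
  classical
  set f1 := SchwartzMap.derivCLM ℝ ℂ f with hf1
  set f2 := SchwartzMap.derivCLM ℝ ℂ f1 with hf2
  set f3 := SchwartzMap.derivCLM ℝ ℂ f2 with hf3
  set f4 := SchwartzMap.derivCLM ℝ ℂ f3 with hf4
  have key : ∀ (g : SchwartzMap ℝ ℂ) (x : ℝ),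
      HasDerivAt (⇑g) ((SchwartzMap.derivCLM ℝ ℂ g) x) x := by
    intro g x
    rw [SchwartzMap.derivCLM_apply]
    exact (g.differentiable x).hasDerivAt
  have trA : ∀ (g : SchwartzMap ℝ ℂ) (s t : ℝ),
      HasDerivAt (fun t => g (s + t)) ((SchwartzMap.derivCLM ℝ ℂ g) (s + t)) t := by
    intro g s t
    have h1 : HasDerivAt (fun t : ℝ => s + t) 1 t := (hasDerivAt_id t).const_add s
    exact ((key g (s + t)).scomp t h1).congr_deriv (by simp)
  have trB : ∀ (g : SchwartzMap ℝ ℂ) (s t : ℝ),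
      HasDerivAt (fun t => g (s - t)) (-((SchwartzMap.derivCLM ℝ ℂ g) (s - t))) t := by
    intro g s t
    have h1 : HasDerivAt (fun t : ℝ => s - t) (-1) t := (hasDerivAt_id t).const_sub s
    exact ((key g (s - t)).scomp t h1).congr_deriv (by simp)
  have hderiv2 : deriv (deriv (⇑f)) = ⇑f2 := by
    have e1 : deriv (⇑f) = ⇑f1 := funext fun x => (SchwartzMap.derivCLM_apply ℝ f x).symm
    rw [e1]
    exact funext fun x => (SchwartzMap.derivCLM_apply ℝ f1 x).symm
  obtain ⟨A0, hA0, hA0'⟩ := f4.decay 0 0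
  obtain ⟨A2, hA2, hA2'⟩ := f4.decay 2 0
  obtain ⟨B4, hB4p, hB4'⟩ := f.decay 4 0
  obtain ⟨B6, hB6p, hB6'⟩ := f.decay 6 0
  set A := A0 + A2 with hAdef
  set B := B4 + B6 with hBdef
  have hApos : 0 < A := by positivity
  have hBpos : 0 < B := by positivity
  have hA : ∀ u : ℝ, (1 + u^2) * ‖f4 u‖ ≤ A := by
    intro u
    have h0 := hA0' u
    have h2 := hA2' u
    rw [norm_iteratedFDeriv_zero] at h0 h2
    simp only [pow_zero, one_mul, Real.norm_eq_abs] at h0 h2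
    nlinarith [sq_abs u, norm_nonneg (f4 u)]
  have hB : ∀ s : ℝ, (1 + s^2) * (s^4 * ‖f s‖) ≤ B := by
    intro s
    have h4 := hB4' s
    have h6 := hB6' s
    rw [norm_iteratedFDeriv_zero] at h4 h6
    simp only [Real.norm_eq_abs] at h4 h6
    have e4 : |s|^4 = s^4 := by
      rw [← abs_pow]; exact abs_of_nonneg (by positivity)
    have e6 : |s|^6 = s^6 := by
      rw [← abs_pow]; exact abs_of_nonneg (by positivity)
    rw [e4] at h4; rw [e6] at h6
    calc (1 + s^2) * (s^4 * ‖f s‖) = s^4 * ‖f s‖ + s^6 * ‖f s‖ := by ring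
      _ ≤ B4 + B6 := add_le_add h4 h6
  set D := A/4 + B/12 + 1 with hDdef
  have hDpos : 0 < D := by positivity
  set w : ℝ → ℝ := fun s => (1 + s^2)⁻¹ with hw
  have hwc : Continuous w :=
    (continuous_const.add (continuous_pow 2)).inv₀ (fun x => (by positivity : (0:ℝ) < 1 + x^2).ne')
  have hw2 : MemLp w 2 volume := by
    rw [memLp_two_iff_integrable_sq hwc.aestronglyMeasurable]
    refine integrable_inv_one_add_sq.mono ((hwc.pow 2).aestronglyMeasurable)
      (Filter.Eventually.of_forall fun x => ?_)
    have h1 : (0:ℝ) < 1 + x^2 := by positivity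
    have h2 : w x ≤ 1 := by
      rw [hw]
      simp only
      rw [inv_le_one_iff₀]
      right; nlinarith
    have h3 : 0 ≤ w x := by rw [hw]; positivity
    rw [Real.norm_eq_abs, Real.norm_eq_abs, abs_of_nonneg (by positivity),
      abs_of_nonneg (by positivity)]
    show w x ^ 2 ≤ w x
    nlinarith
  have hWfin : eLpNorm w 2 volume ≠ ⊤ := hw2.2.ne
  set W := (eLpNorm w 2 volume).toReal with hWdef
  have hWnn : 0 ≤ W := ENNReal.toReal_nonneg
  refine ⟨D * (W + 1), by positivity, ?_⟩
  intro θ hθ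
  obtain ⟨hθ0, hθ1⟩ := hθ
  set h := Real.sqrt θ with hh
  have hh0 : 0 < h := Real.sqrt_pos.2 hθ0
  have hh1 : h ≤ 1 := by
    rw [hh, show (1:ℝ) = Real.sqrt 1 by simp]
    exact Real.sqrt_le_sqrt hθ1
  have hsq : h^2 = θ := Real.sq_sqrt hθ0.le
  have hθC : (θ:ℂ) = (h:ℂ)^2 := by rw [← hsq]; push_cast; ring
  have point : ∀ s : ℝ,
      ‖(-(f (s + h)) - f (s - h) - ((2 * Real.cos (h * s) : ℝ) : ℂ) * f s) + 4 * f s -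
        (θ : ℂ) * (-(deriv (deriv (⇑f)) s) + ((s : ℂ) ^ 2) * f s)‖ ≤
      (θ^2 * D) * w s := by
    intro s
    have hpos : (0:ℝ) < 1 + s^2 := by positivity
    set K := 6 * A / (1 + s^2) with hK
    set g0 : ℝ → ℂ := fun t => f (s + t) + f (s - t) - (2:ℝ) • f s - t^2 • f2 s with hg0
    set g1 : ℝ → ℂ := fun t => f1 (s + t) - f1 (s - t) - (2*t) • f2 s with hg1
    set g2f : ℝ → ℂ := fun t => f2 (s + t) + f2 (s - t) - (2:ℝ) • f2 s with hg2f
    set g3f : ℝ → ℂ := fun t => f3 (s + t) - f3 (s - t) with hg3f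
    set g4f : ℝ → ℂ := fun t => f4 (s + t) + f4 (s - t) with hg4f
    have d0 : ∀ t, HasDerivAt g0 (g1 t) t := by
      intro t
      have hd := (((trA f s t).add (trB f s t)).sub
        (hasDerivAt_const t ((2:ℝ) • (f s : ℂ)))).sub
        ((hasDerivAt_pow 2 t).smul_const (f2 s : ℂ))
      refine hd.congr_deriv ?_
      rw [hg1, ← hf1]
      simp only [pow_one, Nat.cast_ofNat]
      module
    have d1 : ∀ t, HasDerivAt g1 (g2f t) t := by
      intro t
      have hd := ((trA f1 s t).sub (trB f1 s t)).sub
        (((hasDerivAt_id t).const_mul (2:ℝ)).smul_const (f2 s : ℂ))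
      refine hd.congr_deriv ?_
      rw [hg2f, ← hf2]
      simp only [mul_one]
      module
    have d2 : ∀ t, HasDerivAt g2f (g3f t) t := by
      intro t
      have hd := ((trA f2 s t).add (trB f2 s t)).sub
        (hasDerivAt_const t ((2:ℝ) • (f2 s : ℂ)))
      refine hd.congr_deriv ?_
      rw [hg3f, ← hf3]
      module
    have d3 : ∀ t, HasDerivAt g3f (g4f t) t := by
      intro t
      have hd := (trA f3 s t).sub (trB f3 s t)
      refine hd.congr_deriv ?_
      rw [hg4f, ← hf4]
      module
    have z0 : g0 0 = 0 := by rw [hg0]; simp [two_smul]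
    have z1 : g1 0 = 0 := by rw [hg1]; simp
    have z2 : g2f 0 = 0 := by rw [hg2f]; simp [two_smul]
    have z3 : g3f 0 = 0 := by rw [hg3f]; simp
    have b4 : ∀ t ∈ Set.Icc (0:ℝ) h, ‖g4f t‖ ≤ K * t^0 := by
      intro t ht
      have ht0 : 0 ≤ t := ht.1
      have ht1 : t ≤ 1 := ht.2.trans hh1
      have ht2 : t^2 ≤ 1 := by nlinarith
      have e1 := hA (s+t)
      have e2 := hA (s-t)
      have n1 : (0:ℝ) ≤ ‖f4 (s+t)‖ := norm_nonneg _
      have n2 : (0:ℝ) ≤ ‖f4 (s-t)‖ := norm_nonneg _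
      have k1 : (1+s^2) ≤ 3*(1+(s+t)^2) := by nlinarith [sq_nonneg (s+2*t)]
      have k2 : (1+s^2) ≤ 3*(1+(s-t)^2) := by nlinarith [sq_nonneg (s-2*t)]
      rw [pow_zero, mul_one, hK, le_div_iff₀ hpos]
      have step : ‖g4f t‖ ≤ ‖f4 (s+t)‖ + ‖f4 (s-t)‖ := norm_add_le _ _
      have m1 := mul_le_mul_of_nonneg_left k1 n1
      have m2 := mul_le_mul_of_nonneg_left k2 n2
      nlinarith [mul_le_mul_of_nonneg_right step hpos.le]
    have c3 := mvt_pow z3 d3 b4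
    have b3 : ∀ t ∈ Set.Icc (0:ℝ) h, ‖g3f t‖ ≤ K * t^1 := by
      intro t ht; have := c3 t ht; norm_num at this ⊢; exact this
    have c2 := mvt_pow z2 d2 b3
    have b2 : ∀ t ∈ Set.Icc (0:ℝ) h, ‖g2f t‖ ≤ (K/2) * t^2 := by
      intro t ht; have := c2 t ht; norm_num at this ⊢; exact this
    have c1 := mvt_pow z1 d1 b2
    have b1 : ∀ t ∈ Set.Icc (0:ℝ) h, ‖g1 t‖ ≤ (K/6) * t^3 := by
      intro t ht; have := c1 t ht; norm_num at this ⊢; linarith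
    have c0 := mvt_pow z0 d0 b1
    have hg0h : ‖g0 h‖ ≤ K/24 * h^4 := by
      have := c0 h ⟨hh0.le, le_refl h⟩
      norm_num at this ⊢
      linarith
    have hψ := cos_taylor (h*s)
    set c : ℝ := 2 * (Real.cos (h*s) - 1 + (h*s)^2/2) with hc
    have hTeq : (-(f (s + h)) - f (s - h) - ((2 * Real.cos (h * s) : ℝ) : ℂ) * f s) + 4 * f s -
        (θ : ℂ) * (-(deriv (deriv (⇑f)) s) + ((s : ℂ) ^ 2) * f s)
        = -(g0 h) - (c : ℝ) • (f s : ℂ) := by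
      rw [hderiv2, hg0, hc, hθC]
      simp only [Complex.real_smul]
      push_cast
      ring
    have hcb : |c| ≤ θ^2 * s^4 / 12 := by
      rw [hc, abs_mul, abs_two]
      have e : (h*s)^4 = θ^2 * s^4 := by rw [← hsq]; ring
      rw [e] at hψ
      linarith [hψ]
    have hKmul : K * (1+s^2) = 6*A := by
      rw [hK]; field_simp
    have hnf : (0:ℝ) ≤ ‖f s‖ := norm_nonneg _
    have hBs := hB s
    have hθ2 : 0 < θ^2 := by positivity
    have main : ‖-(g0 h) - (c : ℝ) • (f s : ℂ)‖ * (1+s^2) ≤ θ^2 * D := by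
      have step : ‖-(g0 h) - (c : ℝ) • (f s : ℂ)‖ ≤ ‖g0 h‖ + |c| * ‖f s‖ := by
        calc ‖-(g0 h) - (c : ℝ) • (f s : ℂ)‖ ≤ ‖-(g0 h)‖ + ‖(c : ℝ) • (f s : ℂ)‖ :=
              norm_sub_le _ _
          _ = ‖g0 h‖ + |c| * ‖f s‖ := by rw [norm_neg, norm_smul, Real.norm_eq_abs]
      have h4θ : h^4 = θ^2 := by rw [← hsq]; ring
      have t1 : ‖g0 h‖ * (1+s^2) ≤ θ^2 * A / 4 := by
        have := mul_le_mul_of_nonneg_right hg0h hpos.le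
        calc ‖g0 h‖ * (1+s^2) ≤ K/24 * h^4 * (1+s^2) := this
          _ = (K * (1+s^2)) * h^4 / 24 := by ring
          _ = 6*A*h^4/24 := by rw [hKmul]
          _ = θ^2 * A / 4 := by rw [h4θ]; ring
      have t2 : |c| * ‖f s‖ * (1+s^2) ≤ θ^2 * B / 12 := by
        have l1 : |c| * ‖f s‖ * (1+s^2) ≤ (θ^2 * s^4 / 12) * ‖f s‖ * (1+s^2) := by
          have := mul_le_mul_of_nonneg_right (mul_le_mul_of_nonneg_right hcb hnf) hpos.le
          linarith
        have l2 : (θ^2 * s^4 / 12) * ‖f s‖ * (1+s^2) = θ^2/12 * ((1+s^2) * (s^4 * ‖f s‖)) := by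
          ring
        have l3 : θ^2/12 * ((1+s^2) * (s^4 * ‖f s‖)) ≤ θ^2/12 * B :=
          mul_le_mul_of_nonneg_left hBs (by positivity)
        calc |c| * ‖f s‖ * (1+s^2) ≤ θ^2/12 * ((1+s^2) * (s^4 * ‖f s‖)) := by
              rw [← l2]; exact l1
          _ ≤ θ^2/12 * B := l3
          _ = θ^2 * B / 12 := by ring
      have sum : (‖g0 h‖ + |c| * ‖f s‖) * (1+s^2) ≤ θ^2 * (A/4 + B/12) := by
        nlinarith
      have : ‖-(g0 h) - (c : ℝ) • (f s : ℂ)‖ * (1+s^2) ≤ (‖g0 h‖ + |c| * ‖f s‖) * (1+s^2) :=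
        mul_le_mul_of_nonneg_right step hpos.le
      have hD : θ^2 * (A/4 + B/12) ≤ θ^2 * D := by
        rw [hDdef]; nlinarith
      exact (this.trans sum).trans hD
    rw [hTeq]
    have : ‖-(g0 h) - (c : ℝ) • (f s : ℂ)‖ ≤ θ^2 * D / (1+s^2) :=
      (le_div_iff₀ hpos).2 main
    rw [hw]
    simpa [div_eq_mul_inv] using this
  calc eLpNorm (fun s : ℝ =>
          (-(f (s + h)) - f (s - h) - ((2 * Real.cos (h * s) : ℝ) : ℂ) * f s) + 4 * f s -
            (θ : ℂ) * (-(deriv (deriv (⇑f)) s) + ((s : ℂ) ^ 2) * f s)) 2 volume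
      ≤ eLpNorm ((θ^2 * D) • w) 2 volume := by
        refine eLpNorm_mono fun s => ?_
        have hp := point s
        have hnn : 0 ≤ (θ^2 * D) * w s := by
          have : 0 ≤ w s := by rw [hw]; positivity
          positivity
        calc ‖_‖ ≤ (θ^2 * D) * w s := hp
          _ ≤ ‖((θ^2 * D) • w) s‖ := by
              rw [Pi.smul_apply, smul_eq_mul, Real.norm_eq_abs]
              exact le_abs_self _
    _ = ‖θ^2 * D‖₊ • eLpNorm w 2 volume := eLpNorm_const_smul _ _ _ _
    _ ≤ ENNReal.ofReal (D * (W + 1) * θ^2) := by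
        have hc1 : (‖θ^2 * D‖₊ : ℝ≥0∞) = ENNReal.ofReal (θ^2 * D) :=
          Real.enorm_eq_ofReal (by positivity)
        have hX : eLpNorm w 2 volume ≤ ENNReal.ofReal (W + 1) := by
          rw [← ENNReal.ofReal_toReal hWfin]
          exact ENNReal.ofReal_le_ofReal (by linarith)
        calc (‖θ^2 * D‖₊ : ℝ≥0∞) • eLpNorm w 2 volume
            = ENNReal.ofReal (θ^2 * D) * eLpNorm w 2 volume := by rw [hc1]; rfl
          _ ≤ ENNReal.ofReal (θ^2 * D) * ENNReal.ofReal (W + 1) :=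
              mul_le_mul_right hX _
          _ = ENNReal.ofReal ((θ^2 * D) * (W + 1)) :=
              (ENNReal.ofReal_mul (by positivity)).symm
          _ = ENNReal.ofReal (D * (W + 1) * θ^2) := by ring_nf
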